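/- arXiv:2402.05369 — 4 statements merged into one kernel-verified Lean document; each statement's English description precedes it below -/
import Mathlib

section
/- Let μ be a probability distribution on a finite set Y with μ(y) > 0, and π*(y) = μ(y)·exp(r(y)/α)/Z with Z = Σ_y μ(y)exp(r(y)/α). With the joint distribution of (ν, y₁,…,y_K) as in the InfoNCA setup (ν uniform, y_ν ~ π*, others i.i.d. μ), the posterior satisfies P(ν | y₁,…,y_K) = exp(r(y_ν)/α) / Σ_{i=1}^K exp(r(y_i)/α). -/
open Finset Real

/-!
Since `π*(y) = μ(y) · exp(r(y)/α) / Z`, the factor `π*(y_k)` in the joint density of the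
planted index `k` combines with the `μ(y_i)`, `i ≠ k`, into `exp(r(y_k)/α)` times the
full product `∏ μ(y_i) / (K Z)`. That prefactor does not depend on `k`, so it cancels in
Bayes' formula and leaves the softmax of the rewards.
-/

theorem Finset.mul_prod_univ_erase_of_eq_mul {ι M Y : Type*} [Fintype ι] [DecidableEq ι]
    [CommMonoid M] {p μ ρ : Y → M} (h : ∀ y, p y = μ y * ρ y) (ys : ι → Y) (k : ι) :
    p (ys k) * ∏ i ∈ univ.erase k, μ (ys i) = ρ (ys k) * ∏ i, μ (ys i) := by
  rw [h, ← mul_prod_erase univ (fun i => μ (ys i)) (mem_univ k)]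
  ac_rfl

theorem div_sum_eq_div_sum_of_eq_mul {ι K : Type*} [Fintype ι] [Semifield K]
    {a b : ι → K} {c : K} (hc : c ≠ 0) (h : ∀ k, a k = c * b k) (k : ι) :
    a k / ∑ j, a j = b k / ∑ j, b j := by
  simp only [h, ← mul_sum, mul_div_mul_left _ _ hc]

theorem infonca_posterior_softmax_general
    {Y : Type*} [Fintype Y]
    (μ : Y → ℝ) (hμpos : ∀ y, 0 < μ y)
    (r : Y → ℝ) (α : ℝ)
    (Z : ℝ) (hZ : Z = ∑ y, μ y * Real.exp (r y / α))
    (piStar : Y → ℝ) (hπ : ∀ y, piStar y = μ y * Real.exp (r y / α) / Z)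
    (K : ℕ) (hK : 1 ≤ K)
    (joint : Fin K → (Fin K → Y) → ℝ)
    (hjoint : ∀ (ν : Fin K) (ys : Fin K → Y),
      joint ν ys = (1 / K) * piStar (ys ν) * ∏ i ∈ Finset.univ.erase ν, μ (ys i)) :
    ∀ (ν : Fin K) (ys : Fin K → Y),
      joint ν ys / (∑ k, joint k ys) =
        Real.exp (r (ys ν) / α) / ∑ i, Real.exp (r (ys i) / α) := by
  intro ν ys
  have hZpos : 0 < Z :=
    hZ ▸ sum_pos (fun y _ => mul_pos (hμpos y) (exp_pos _)) ⟨ys ν, mem_univ _⟩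
  have hπ' : ∀ y, piStar y = μ y * (Real.exp (r y / α) / Z) := fun y => by
    rw [hπ, mul_div_assoc]
  have hprefactor : (1 / K : ℝ) * (∏ i, μ (ys i)) / Z ≠ 0 := by
    have hKpos : (0 : ℝ) < K := by exact_mod_cast hK
    have hprod : 0 < ∏ i, μ (ys i) := prod_pos fun i _ => hμpos (ys i)
    positivity
  refine div_sum_eq_div_sum_of_eq_mul (a := (joint · ys)) (b := fun k => Real.exp (r (ys k) / α))
    hprefactor (fun k => ?_) ν
  rw [hjoint, mul_assoc, mul_prod_univ_erase_of_eq_mul hπ' ys k]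
  ring

/-- InfoNCA posterior: with π*(y) = μ(y)·exp(r(y)/α)/Z, the Bayes posterior of the
positive index ν given the K responses is the softmax of rewards; the normalizer Z
cancels. -/
theorem infonca_posterior_softmax
    {Y : Type*} [Fintype Y]
    (μ : Y → ℝ) (hμpos : ∀ y, 0 < μ y) (hμsum : ∑ y, μ y = 1)
    (r : Y → ℝ) (α : ℝ) (hα : 0 < α)
    (Z : ℝ) (hZ : Z = ∑ y, μ y * Real.exp (r y / α))
    (piStar : Y → ℝ) (hπ : ∀ y, piStar y = μ y * Real.exp (r y / α) / Z)
    (K : ℕ) (hK : 1 ≤ K)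
    (joint : Fin K → (Fin K → Y) → ℝ)
    (hjoint : ∀ (ν : Fin K) (ys : Fin K → Y),
      joint ν ys = (1 / K) * piStar (ys ν) * ∏ i ∈ Finset.univ.erase ν, μ (ys i)) :
    ∀ (ν : Fin K) (ys : Fin K → Y),
      joint ν ys / (∑ k, joint k ys) =
        Real.exp (r (ys ν) / α) / ∑ i, Real.exp (r (ys i) / α) :=
  infonca_posterior_softmax_general μ hμpos r α Z hZ piStar hπ K hK joint hjoint
end

section
/- For K = 2 and rewards r₁ > r₂, the InfoNCA loss −Σ_{i=1,2} (exp(r_i/α)/(exp(r₁/α)+exp(r₂/α))) · log(exp(f_i)/(exp(f₁)+exp(f₂))) converges, as α → 0⁺, to the DPO loss −log σ(f₁ − f₂), where σ(t) = 1/(1+exp(−t)). -/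
/-! The two-point softmax is a sigmoid of the difference: the InfoNCA weights are
`σ((r₁ - r₂)/α)` and `σ((r₂ - r₁)/α)`, which tend to `1` and `0` as `α → 0⁺`, so only the
log-likelihood term `log σ(f₁ - f₂)` of the preferred response survives. -/

open Filter Real Topology

noncomputable def sigmoid (t : ℝ) : ℝ := 1 / (1 + Real.exp (-t))

theorem sigmoid_eq_real_sigmoid (t : ℝ) : _root_.sigmoid t = Real.sigmoid t := by
  rw [_root_.sigmoid, Real.sigmoid_def, one_div]

theorem exp_div_exp_add_exp (a b : ℝ) : exp a / (exp a + exp b) = Real.sigmoid (a - b) := by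
  rw [Real.sigmoid_def, neg_sub, exp_sub]
  field_simp

theorem exp_div_exp_add_exp' (a b : ℝ) : exp b / (exp a + exp b) = Real.sigmoid (b - a) := by
  rw [add_comm, exp_div_exp_add_exp]

section TemperatureLimit

variable {𝕜 : Type*} [Field 𝕜] [LinearOrder 𝕜] [IsStrictOrderedRing 𝕜] [TopologicalSpace 𝕜]
  [OrderTopology 𝕜] {c : 𝕜}

theorem tendsto_const_div_nhdsGT_zero_atTop (hc : 0 < c) :
    Tendsto (fun x : 𝕜 => c / x) (𝓝[>] 0) atTop := by
  simpa only [div_eq_mul_inv] using tendsto_inv_nhdsGT_zero.const_mul_atTop hc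

theorem tendsto_const_div_nhdsGT_zero_atBot (hc : c < 0) :
    Tendsto (fun x : 𝕜 => c / x) (𝓝[>] 0) atBot := by
  simpa only [div_eq_mul_inv] using tendsto_inv_nhdsGT_zero.const_mul_atTop_of_neg hc

end TemperatureLimit

theorem tendsto_sigmoid_const_div_nhdsGT_zero_of_pos {c : ℝ} (hc : 0 < c) :
    Tendsto (fun α : ℝ => Real.sigmoid (c / α)) (𝓝[>] 0) (𝓝 1) :=
  Real.tendsto_sigmoid_atTop.comp (tendsto_const_div_nhdsGT_zero_atTop hc)

theorem tendsto_sigmoid_const_div_nhdsGT_zero_of_neg {c : ℝ} (hc : c < 0) :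
    Tendsto (fun α : ℝ => Real.sigmoid (c / α)) (𝓝[>] 0) (𝓝 0) :=
  Real.tendsto_sigmoid_atBot.comp (tendsto_const_div_nhdsGT_zero_atBot hc)

/-- As α → 0⁺, the K=2 InfoNCA loss converges to the DPO loss −log σ(f₁ − f₂). -/
theorem infonca_tendsto_dpo
    (r₁ r₂ : ℝ) (hr : r₁ > r₂) (f₁ f₂ : ℝ) :
    Tendsto (fun α : ℝ =>
        -((Real.exp (r₁ / α) / (Real.exp (r₁ / α) + Real.exp (r₂ / α))) *
            Real.log (Real.exp f₁ / (Real.exp f₁ + Real.exp f₂)) +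
          (Real.exp (r₂ / α) / (Real.exp (r₁ / α) + Real.exp (r₂ / α))) *
            Real.log (Real.exp f₂ / (Real.exp f₁ + Real.exp f₂))))
      (nhdsWithin 0 (Set.Ioi 0))
      (nhds (-Real.log (_root_.sigmoid (f₁ - f₂)))) := by
  simp only [exp_div_exp_add_exp, exp_div_exp_add_exp', ← sub_div, sigmoid_eq_real_sigmoid]
  have hw₁ := tendsto_sigmoid_const_div_nhdsGT_zero_of_pos (sub_pos.2 hr)
  have hw₂ := tendsto_sigmoid_const_div_nhdsGT_zero_of_neg (sub_neg.2 hr)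
  simpa using ((hw₁.mul_const (log (Real.sigmoid (f₁ - f₂)))).add
    (hw₂.mul_const (log (Real.sigmoid (f₂ - f₁))))).neg
end

section
/- Let μ be a probability distribution with full support on a finite set Y, r : Y → ℝ, α > 0, and Z = Σ_y μ(y)exp(r(y)/α). The NCA population objective L(f) = −Σ_y μ(y)[ (exp(r(y)/α)/Z)·log σ(f(y)) + log σ(−f(y)) ] over functions f : Y → ℝ is uniquely minimized by f*(y) = r(y)/α − log Z, and the corresponding π(y) = μ(y)exp(f*(y)) equals μ(y)exp(r(y)/α)/Z, a probability distribution. -/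
open Finset Real

/-!
Since `log σ(t) = t - log (1 + exp t)` and `log σ(-t) = -log (1 + exp t)`, the objective is
`-∑ y, μ y * (w t - (1 + w) log (1 + exp t))` with `t = f y` and `w = exp (r y / α) / Z`.
By strict concavity of `log`, each summand is uniquely maximised at `t = log w = f* y`, so
the `μ`-weighted sum is uniquely maximised at `f*`; and `∑ μ exp f* = 1` is the definition of `Z`.
-/

lemma sigmoid_eq_exp_div (t : ℝ) : _root_.sigmoid t = exp t / (1 + exp t) := by
  rw [_root_.sigmoid, exp_neg]
  field_simp
  ring

lemma log_sigmoid (t : ℝ) : log (_root_.sigmoid t) = t - log (1 + exp t) := by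
  rw [sigmoid_eq_exp_div, log_div (exp_ne_zero t) (by positivity), log_exp]

lemma log_sigmoid_neg (t : ℝ) : log (_root_.sigmoid (-t)) = -log (1 + exp t) := by
  rw [_root_.sigmoid, neg_neg, one_div, log_inv]

noncomputable def ncaLogLik (w t : ℝ) : ℝ :=
  w * log (_root_.sigmoid t) + log (_root_.sigmoid (-t))

lemma ncaLogLik_eq (w t : ℝ) : ncaLogLik w t = w * t - (1 + w) * log (1 + exp t) := by
  rw [ncaLogLik, log_sigmoid, log_sigmoid_neg]
  ring

/-- Strict concavity of `log` at the points `1` and `exp t / w` with weights `1 : w`. -/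
lemma ncaLogLik_lt_log {w t : ℝ} (hw : 0 < w) (ht : t ≠ log w) :
    ncaLogLik w t < ncaLogLik w (log w) := by
  have hu : exp t / w ≠ 1 := by
    rw [Ne, div_eq_one_iff_eq hw.ne', ← exp_log hw, exp_eq_exp]
    exact ht
  have key := strictConcaveOn_log_Ioi.2 (Set.mem_Ioi.2 one_pos)
    (Set.mem_Ioi.2 (div_pos (exp_pos t) hw)) hu.symm
    (by positivity : 0 < 1 / (1 + w)) (by positivity : 0 < w / (1 + w)) (by field_simp)
  have hmean : 1 / (1 + w) * 1 + w / (1 + w) * (exp t / w) = (1 + exp t) / (1 + w) := by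
    field_simp
  simp only [smul_eq_mul] at key
  rw [hmean, log_one, mul_zero, zero_add, log_div (exp_ne_zero t) hw.ne', log_exp,
    log_div (by positivity) (by positivity), div_mul_eq_mul_div, div_lt_iff₀ (by positivity)] at key
  rw [ncaLogLik_eq, ncaLogLik_eq, exp_log hw]
  linarith

lemma ncaLogLik_le_log {w : ℝ} (hw : 0 < w) (t : ℝ) : ncaLogLik w t ≤ ncaLogLik w (log w) := by
  rcases eq_or_ne t (log w) with rfl | ht
  · exact le_rfl
  · exact (ncaLogLik_lt_log hw ht).le

section WeightedSum

variable {ι : Type*} [Fintype ι] {c : ι → ℝ} {F : ι → ℝ → ℝ} {x : ι → ℝ}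

lemma sum_mul_le_sum_mul_of_forall_le (hc : ∀ i, 0 ≤ c i) (hle : ∀ i t, F i t ≤ F i (x i))
    (g : ι → ℝ) : ∑ i, c i * F i (g i) ≤ ∑ i, c i * F i (x i) :=
  sum_le_sum fun i _ => mul_le_mul_of_nonneg_left (hle i (g i)) (hc i)

lemma sum_mul_lt_sum_mul_of_forall_lt (hc : ∀ i, 0 < c i) (hle : ∀ i t, F i t ≤ F i (x i))
    (hlt : ∀ i t, t ≠ x i → F i t < F i (x i)) {g : ι → ℝ} (hg : g ≠ x) :
    ∑ i, c i * F i (g i) < ∑ i, c i * F i (x i) := by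
  obtain ⟨i, hi⟩ := Function.ne_iff.1 hg
  exact sum_lt_sum (fun j _ => mul_le_mul_of_nonneg_left (hle j (g j)) (hc j).le)
    ⟨i, mem_univ i, mul_lt_mul_of_pos_left (hlt i _ hi) (hc i)⟩

end WeightedSum

theorem nca_population_minimizer_general
    {Y : Type*} [Fintype Y]
    (μ : Y → ℝ) (hμpos : ∀ y, 0 < μ y) (hμsum : ∑ y, μ y = 1)
    (r : Y → ℝ) (α : ℝ)
    (Z : ℝ) (hZ : Z = ∑ y, μ y * Real.exp (r y / α))
    (L : (Y → ℝ) → ℝ)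
    (hL : ∀ f : Y → ℝ,
      L f = - ∑ y, μ y * ((Real.exp (r y / α) / Z) * Real.log (_root_.sigmoid (f y)) +
        Real.log (_root_.sigmoid (-(f y)))))
    (fstar : Y → ℝ) (hfstar : ∀ y, fstar y = r y / α - Real.log Z) :
    (∀ g : Y → ℝ, L fstar ≤ L g) ∧
    (∀ g : Y → ℝ, L g = L fstar → g = fstar) ∧
    (∀ y, μ y * Real.exp (fstar y) = μ y * Real.exp (r y / α) / Z) ∧
    (∑ y, μ y * Real.exp (fstar y) = 1) := by
  have hZ_pos : 0 < Z := hZ ▸ sum_pos (fun y _ => mul_pos (hμpos y) (exp_pos _))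
    (nonempty_of_sum_ne_zero (hμsum ▸ one_ne_zero))
  set w : Y → ℝ := fun y => exp (r y / α) / Z
  have hw_pos : ∀ y, 0 < w y := fun y => div_pos (exp_pos _) hZ_pos
  have hfstar_log : ∀ y, fstar y = log (w y) := fun y => by
    rw [hfstar, log_div (exp_ne_zero _) hZ_pos.ne', log_exp]
  have hL' : ∀ f, L f = -∑ y, μ y * ncaLogLik (w y) (f y) := hL
  have hle : ∀ y t, ncaLogLik (w y) t ≤ ncaLogLik (w y) (fstar y) := fun y t =>
    hfstar_log y ▸ ncaLogLik_le_log (hw_pos y) t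
  have hlt : ∀ y t, t ≠ fstar y → ncaLogLik (w y) t < ncaLogLik (w y) (fstar y) := fun y t ht =>
    hfstar_log y ▸ ncaLogLik_lt_log (hw_pos y) (hfstar_log y ▸ ht)
  have hπ : ∀ y, μ y * exp (fstar y) = μ y * exp (r y / α) / Z := fun y => by
    rw [hfstar_log, exp_log (hw_pos y), mul_div_assoc]
  refine ⟨fun g => ?_, fun g hg => ?_, hπ, ?_⟩
  · rw [hL', hL', neg_le_neg_iff]
    exact sum_mul_le_sum_mul_of_forall_le (fun y => (hμpos y).le) hle g
  · by_contra hne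
    rw [hL', hL', neg_inj] at hg
    exact (sum_mul_lt_sum_mul_of_forall_lt hμpos hle hlt hne).ne hg
  · rw [sum_congr rfl fun y _ => hπ y, ← sum_div, ← hZ, div_self hZ_pos.ne']

/-- NCA optimal solution (Theorem 2(b)): the NCA population objective is uniquely
minimized by f*(y) = r(y)/α − log Z, and μ·exp(f*) equals the target policy
μ(y)exp(r(y)/α)/Z, a probability distribution. -/
theorem nca_population_minimizer
    {Y : Type*} [Fintype Y]
    (μ : Y → ℝ) (hμpos : ∀ y, 0 < μ y) (hμsum : ∑ y, μ y = 1)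
    (r : Y → ℝ) (α : ℝ) (hα : 0 < α)
    (Z : ℝ) (hZ : Z = ∑ y, μ y * Real.exp (r y / α))
    (L : (Y → ℝ) → ℝ)
    (hL : ∀ f : Y → ℝ,
      L f = - ∑ y, μ y * ((Real.exp (r y / α) / Z) * Real.log (_root_.sigmoid (f y)) +
        Real.log (_root_.sigmoid (-(f y)))))
    (fstar : Y → ℝ) (hfstar : ∀ y, fstar y = r y / α - Real.log Z) :
    (∀ g : Y → ℝ, L fstar ≤ L g) ∧
    (∀ g : Y → ℝ, L g = L fstar → g = fstar) ∧
    (∀ y, μ y * Real.exp (fstar y) = μ y * Real.exp (r y / α) / Z) ∧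
    (∑ y, μ y * Real.exp (fstar y) = 1) :=
  nca_population_minimizer_general μ hμpos hμsum r α Z hZ L hL fstar hfstar
end

section
/- In the NCA preference loss L(f_w, f_l) = −log σ(f_w) − (1/2)log σ(−f_w) − (1/2)log σ(−f_l) over (f_w, f_l) ∈ ℝ², the function h(t) = −log σ(t) − (1/2)log σ(−t) is strictly convex on ℝ with unique minimum at t = log 2, and g(t) = −(1/2)log σ(−t) is strictly decreasing in −t with infimum 0 approached as t → −∞; hence L has no joint minimizer in f_l, but for fixed f_l the optimal f_w equals log 2. -/
open Real Filter Topology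

noncomputable def sigmoidFn (t : ℝ) : ℝ := 1 / (1 + Real.exp (-t))

lemma one_add_exp_pos (t : ℝ) : (0:ℝ) < 1 + Real.exp t := by positivity

lemma log_sigmoid_s15 (t : ℝ) : Real.log (sigmoidFn t) = -Real.log (1 + Real.exp (-t)) := by
  rw [sigmoidFn, one_div, Real.log_inv]

lemma h_eq (t : ℝ) :
    -Real.log (sigmoidFn t) - (1 / 2) * Real.log (sigmoidFn (-t))
      = 3 / 2 * Real.log (1 + Real.exp t) - t := by
  rw [log_sigmoid_s15, log_sigmoid_s15, neg_neg]
  have h1 : Real.log (1 + Real.exp (-t)) = Real.log (1 + Real.exp t) - t := by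
    have : 1 + Real.exp (-t) = (1 + Real.exp t) * Real.exp (-t) := by
      rw [add_mul, one_mul, ← Real.exp_add]; simp [add_comm]
    rw [this, Real.log_mul (by positivity) (Real.exp_pos _).ne', Real.log_exp]; ring
  rw [h1]; ring

lemma g_eq (t : ℝ) :
    -(1 / 2) * Real.log (sigmoidFn (-t)) = 1 / 2 * Real.log (1 + Real.exp t) := by
  rw [log_sigmoid_s15, neg_neg]; ring

lemma hasDerivAt_F (t : ℝ) :
    HasDerivAt (fun t : ℝ => 3 / 2 * Real.log (1 + Real.exp t) - t)
      (3 / 2 * (Real.exp t / (1 + Real.exp t)) - 1) t := by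
  have h1 : HasDerivAt (fun t : ℝ => 1 + Real.exp t) (Real.exp t) t :=
    (Real.hasDerivAt_exp t).const_add 1
  have h2 := (h1.log (one_add_exp_pos t).ne').const_mul (3/2 : ℝ)
  exact h2.sub (hasDerivAt_id t)

lemma key_min {t : ℝ} (ht : t ≠ Real.log 2) :
    3 / 2 * Real.log 3 - Real.log 2 < 3 / 2 * Real.log (1 + Real.exp t) - t := by
  set y := Real.exp ((t - Real.log 2) / 3) with hy
  have hy0 : 0 < y := Real.exp_pos _
  have hy1 : y ≠ 1 := by
    intro hcontra
    apply ht
    have := Real.log_exp ((t - Real.log 2) / 3)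
    rw [← hy, hcontra, Real.log_one] at this
    linarith
  have het : Real.exp t = 2 * y ^ 3 := by
    rw [hy, ← Real.exp_nat_mul]
    have : (3:ℕ) * ((t - Real.log 2) / 3) = t - Real.log 2 := by push_cast; ring
    rw [this, Real.exp_sub, Real.exp_log (by norm_num)]
    ring
  have hkey : Real.exp ((2/3) * (t - Real.log 2)) < (1 + Real.exp t) / 3 := by
    have h2 : Real.exp ((2/3) * (t - Real.log 2)) = y ^ 2 := by
      rw [hy, ← Real.exp_nat_mul]; congr 1; push_cast; ring
    rw [h2, het]
    nlinarith [sq_nonneg (y - 1), mul_pos (mul_pos hy0 hy0) hy0,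
      mul_pos (sq_pos_of_ne_zero (sub_ne_zero.mpr hy1)) hy0,
      sq_pos_of_ne_zero (sub_ne_zero.mpr hy1)]
  have hlog : (2/3) * (t - Real.log 2) < Real.log ((1 + Real.exp t) / 3) := by
    have := Real.log_lt_log (Real.exp_pos _) hkey
    rwa [Real.log_exp] at this
  have h3 : Real.log ((1 + Real.exp t) / 3) = Real.log (1 + Real.exp t) - Real.log 3 := by
    rw [Real.log_div (one_add_exp_pos t).ne' (by norm_num)]
  rw [h3] at hlog
  linarith

/-- NCA preference loss (K=2, α→0): h(t) = −log σ(t) − (1/2)log σ(−t) is strictly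
convex with unique minimum at t = log 2; g(t) = −(1/2)log σ(−t) is strictly increasing
in t with infimum 0 approached as t → −∞; hence L(f_w, f_l) = h(f_w) + g(f_l) has no
joint minimizer in f_l, but for each fixed f_l the optimal f_w is log 2. -/
theorem nca_preference_loss_structure
    (h g : ℝ → ℝ) (L : ℝ × ℝ → ℝ)
    (hh : ∀ t, h t = -Real.log (sigmoidFn t) - (1 / 2) * Real.log (sigmoidFn (-t)))
    (hg : ∀ t, g t = -(1 / 2) * Real.log (sigmoidFn (-t)))
    (hLdef : ∀ p : ℝ × ℝ, L p = -Real.log (sigmoidFn p.1)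
      - (1 / 2) * Real.log (sigmoidFn (-p.1)) - (1 / 2) * Real.log (sigmoidFn (-p.2))) :
    StrictConvexOn ℝ Set.univ h ∧
    (∀ t : ℝ, t ≠ Real.log 2 → h (Real.log 2) < h t) ∧
    StrictMono g ∧
    (∀ t : ℝ, 0 < g t) ∧
    Tendsto g atBot (nhds 0) ∧
    (¬ ∃ p : ℝ × ℝ, ∀ q : ℝ × ℝ, L p ≤ L q) ∧
    (∀ fl fw : ℝ, fw ≠ Real.log 2 → L (Real.log 2, fl) < L (fw, fl)) := by
  have hF : ∀ t, h t = 3 / 2 * Real.log (1 + Real.exp t) - t := fun t => by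
    rw [hh t, h_eq]
  have hG : ∀ t, g t = 1 / 2 * Real.log (1 + Real.exp t) := fun t => by
    rw [hg t, g_eq]
  have hL : ∀ p : ℝ × ℝ, L p = h p.1 + g p.2 := fun p => by
    rw [hLdef p, hh p.1, hg p.2]; ring
  have hEq : h = fun t : ℝ => 3 / 2 * Real.log (1 + Real.exp t) - t := funext hF
  -- strict convexity
  have hconv : StrictConvexOn ℝ Set.univ h := by
    rw [hEq]
    apply StrictMono.strictConvexOn_univ_of_deriv
    · exact (continuous_const.mul ((continuous_const.add Real.continuous_exp).log
        fun t => (one_add_exp_pos t).ne')).sub continuous_id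
    · have hderiv : deriv (fun t : ℝ => 3 / 2 * Real.log (1 + Real.exp t) - t)
          = fun t => 3 / 2 * (Real.exp t / (1 + Real.exp t)) - 1 :=
        funext fun t => (hasDerivAt_F t).deriv
      rw [hderiv]
      intro a b hab
      have ha := one_add_exp_pos a
      have hb := one_add_exp_pos b
      have hexp : Real.exp a < Real.exp b := Real.exp_lt_exp.mpr hab
      have : Real.exp a / (1 + Real.exp a) < Real.exp b / (1 + Real.exp b) := by
        rw [div_lt_div_iff₀ ha hb]; nlinarith
      simp only []
      linarith
  -- strict minimum
  have hmin : ∀ t : ℝ, t ≠ Real.log 2 → h (Real.log 2) < h t := by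
    intro t ht
    rw [hF, hF]
    have : Real.exp (Real.log 2) = 2 := Real.exp_log (by norm_num)
    rw [this]
    have h3 : (1 : ℝ) + 2 = 3 := by norm_num
    rw [h3]
    exact key_min ht
  -- strict mono g
  have hmono : StrictMono g := by
    intro a b hab
    rw [hG, hG]
    have : Real.log (1 + Real.exp a) < Real.log (1 + Real.exp b) :=
      Real.log_lt_log (one_add_exp_pos a) (by linarith [Real.exp_lt_exp.mpr hab])
    linarith
  have hpos : ∀ t : ℝ, 0 < g t := by
    intro t
    rw [hG]
    have : (0:ℝ) < Real.log (1 + Real.exp t) :=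
      Real.log_pos (by linarith [Real.exp_pos t])
    linarith
  have htend : Tendsto g atBot (nhds 0) := by
    have h1 : Tendsto (fun t : ℝ => 1 + Real.exp t) atBot (nhds 1) := by
      simpa using Real.tendsto_exp_atBot.const_add 1
    have h2 : Tendsto (fun t : ℝ => Real.log (1 + Real.exp t)) atBot (nhds 0) := by
      have := (Real.continuousAt_log (by norm_num : (1:ℝ) ≠ 0)).tendsto.comp h1
      simpa [Function.comp_def] using this
    have h3 := h2.const_mul (1/2 : ℝ)
    simp only [mul_zero] at h3
    have : g = fun t => 1/2 * Real.log (1 + Real.exp t) := funext hG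
    rw [this]
    exact h3
  refine ⟨hconv, hmin, hmono, hpos, htend, ?_, ?_⟩
  · rintro ⟨p, hp⟩
    have := hp (p.1, p.2 - 1)
    rw [hL, hL] at this
    have hlt : g (p.2 - 1) < g p.2 := hmono (by linarith)
    simp at this
    linarith
  · intro fl fw hfw
    rw [hL, hL]
    have := hmin fw hfw
    simp only []
    linarith
end
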